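/- arXiv:1612.00209 — 2 statements merged into one kernel-verified Lean document; each statement's English description precedes it below -/
import Mathlib

section
/- Let A be an m×m nonnegative integer matrix that is (B,u)-rearrangeable. Then for every positive integer k, the matrix A^k is (B^k,u)-rearrangeable. -/
/-- An `m × m` nonnegative integer matrix `A` is `(B, u)`-rearrangeable (with `B` an
`n × n` nonnegative integer matrix and `u = [u_1, …, u_m]`, `u_i ∈ ℤ₊ⁿ`) if for each row
`a_i` of `A` there is a nonnegative integer `p × m` matrix `C` with `p = Σ_j u_{ij}` whose
column sums give `a_i`, and such that the multiset of rows of `C · uᵗ` consists of exactly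
`u_{ij}` copies of the `j`-th row of `B`, for each `j`. -/
def IsRearrangeable {m n : ℕ} (A : Matrix (Fin m) (Fin m) ℕ)
    (B : Matrix (Fin n) (Fin n) ℕ) (u : Fin m → Fin n → ℕ) : Prop :=
  ∀ i : Fin m, ∃ (p : ℕ) (C : Matrix (Fin p) (Fin m) ℕ),
    p = ∑ j : Fin n, u i j ∧
    (∀ j : Fin m, ∑ s : Fin p, C s j = A i j) ∧
    Multiset.map (fun s : Fin p => fun t : Fin n => ∑ j : Fin m, C s j * u j t)
        (Finset.univ.val : Multiset (Fin p))
      = ∑ j : Fin n, (u i j) • ({(B j : Fin n → ℕ)} : Multiset (Fin n → ℕ))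

lemma rearr_intertwine {m n : ℕ} {A : Matrix (Fin m) (Fin m) ℕ}
    {B : Matrix (Fin n) (Fin n) ℕ} {u : Fin m → Fin n → ℕ}
    (h : IsRearrangeable A B u) (i : Fin m) (t : Fin n) :
    ∑ j : Fin m, A i j * u j t = ∑ j : Fin n, u i j * B j t := by
  obtain ⟨p, C, hp, hcol, hmul⟩ := h i
  have h2 := congrArg (fun M : Multiset (Fin n → ℕ) =>
    (Multiset.map (fun f : Fin n → ℕ => f t) M).sum) hmul
  simp only [Multiset.map_map, Function.comp] at h2
  have hL : (Multiset.map (fun s : Fin p => ∑ j : Fin m, C s j * u j t)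
      (Finset.univ.val : Multiset (Fin p))).sum
      = ∑ s : Fin p, ∑ j : Fin m, C s j * u j t := rfl
  rw [hL] at h2
  have hR : (Multiset.map (fun f : Fin n → ℕ => f t)
      (∑ j : Fin n, (u i j) • ({(B j : Fin n → ℕ)} : Multiset (Fin n → ℕ)))).sum
      = ∑ j : Fin n, u i j * B j t := by
    rw [show (Multiset.map (fun f : Fin n → ℕ => f t)) =
        (Multiset.mapAddMonoidHom (fun f : Fin n → ℕ => f t) : Multiset (Fin n → ℕ) →+ Multiset ℕ) from rfl,
      map_sum]
    simp only [show ((Multiset.mapAddMonoidHom (fun f : Fin n → ℕ => f t)) :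
        Multiset (Fin n → ℕ) → Multiset ℕ) = Multiset.map _ from
        Multiset.coe_mapAddMonoidHom _, Multiset.map_nsmul, Multiset.map_singleton,
      Multiset.sum_map_singleton]
    rw [← Multiset.coe_sumAddMonoidHom, map_sum]
    simp [Multiset.nsmul_singleton, Multiset.sum_replicate, mul_comm]
  rw [hR] at h2
  rw [← h2, Finset.sum_comm]
  congr 1; ext j; rw [← Finset.sum_mul, hcol]

lemma rearr_mul {m n : ℕ} {A A' : Matrix (Fin m) (Fin m) ℕ}
    {B B' : Matrix (Fin n) (Fin n) ℕ} {u : Fin m → Fin n → ℕ}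
    (h : IsRearrangeable A B u) (h' : IsRearrangeable A' B' u) :
    IsRearrangeable (A * A') (B * B') u := by
  intro i
  obtain ⟨p, C, hp, hcol, hmul⟩ := h i
  refine ⟨p, C * A', hp, ?_, ?_⟩
  · intro j
    simp only [Matrix.mul_apply]
    rw [Finset.sum_comm]
    simp_rw [← Finset.sum_mul]
    exact Finset.sum_congr rfl fun t _ => by rw [hcol]
  · have key : (fun s : Fin p => fun t : Fin n => ∑ j : Fin m, (C * A') s j * u j t)
        = (fun f : Fin n → ℕ => fun t : Fin n => ∑ q : Fin n, f q * B' q t) ∘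
          (fun s : Fin p => fun t : Fin n => ∑ j : Fin m, C s j * u j t) := by
      funext s
      funext t
      simp only [Function.comp, Matrix.mul_apply]
      calc ∑ j : Fin m, (∑ r : Fin m, C s r * A' r j) * u j t
          = ∑ r : Fin m, C s r * ∑ j : Fin m, A' r j * u j t := by
            simp only [Finset.sum_mul]
            rw [Finset.sum_comm]
            simp [Finset.mul_sum, mul_assoc]
        _ = ∑ r : Fin m, C s r * ∑ q : Fin n, u r q * B' q t := by
            simp_rw [rearr_intertwine h']
        _ = ∑ q : Fin n, (∑ j : Fin m, C s j * u j q) * B' q t := by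
            simp only [Finset.mul_sum, Finset.sum_mul]
            rw [Finset.sum_comm]
            simp [mul_assoc]
    rw [key, ← Multiset.map_map, hmul]
    rw [show (Multiset.map (fun f : Fin n → ℕ => fun t : Fin n => ∑ q : Fin n, f q * B' q t)) =
        (Multiset.mapAddMonoidHom _ : Multiset (Fin n → ℕ) →+ Multiset (Fin n → ℕ)) from rfl,
      map_sum]
    refine Finset.sum_congr rfl fun j _ => ?_
    simp only [show ((Multiset.mapAddMonoidHom (fun f : Fin n → ℕ => fun t : Fin n => ∑ q : Fin n, f q * B' q t)) :
        Multiset (Fin n → ℕ) → Multiset (Fin n → ℕ)) = Multiset.map _ from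
        Multiset.coe_mapAddMonoidHom _, Multiset.map_nsmul, Multiset.map_singleton]
    congr 2

/-- If `A` is `(B,u)`-rearrangeable, then for every positive integer `k`,
`A^k` is `(B^k, u)`-rearrangeable. -/
theorem rearrangeable_pow {m n : ℕ} (A : Matrix (Fin m) (Fin m) ℕ)
    (B : Matrix (Fin n) (Fin n) ℕ) (u : Fin m → Fin n → ℕ)
    (h : IsRearrangeable A B u) :
    ∀ k : ℕ, 0 < k → IsRearrangeable (A ^ k) (B ^ k) u := by
  intro k hk
  induction k with
  | zero => exact absurd hk (lt_irrefl 0)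
  | succ k ih =>
    rcases Nat.eq_zero_or_pos k with hk0 | hk0
    · subst hk0; simpa using h
    · rw [pow_succ, pow_succ]
      exact rearr_mul (ih hk0) h
end

section
/- Let (X, E_v) and (Y, E_v′) be two rooted trees, each with finitely many equivalence classes of vertices [t_1],...,[t_n] and [t_1′],...,[t_n′] respectively (where two vertices are equivalent if their descendant subtrees are graph isomorphic), with the roots in class 1. If both trees have the same incidence matrix B = [b_{ij}] (b_{ij} = number of children in class j of any vertex in class i), then (X,E_v) and (Y,E_v′) are graph isomorphic; moreover the isomorphism can be chosen to map each level X_k bijectively onto Y_k and preserve vertex classes. -/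
namespace SimpleTreeIso

variable {V W : Type*} {n : ℕ}

def ch (root : V) (par : V → V) (v : V) : Set V := {x | par x = v ∧ x ≠ root}

theorem childEquiv_exists
    (rootV : V) (parV : V → V) (clsV : V → Fin n)
    (rootW : W) (parW : W → W) (clsW : W → Fin n)
    (B : Matrix (Fin n) (Fin n) ℕ)
    (hVfin : ∀ v, {w | parV w = v ∧ w ≠ rootV}.Finite)
    (hWfin : ∀ v, {w | parW w = v ∧ w ≠ rootW}.Finite)
    (hVB : ∀ v j, {w | parV w = v ∧ w ≠ rootV ∧ clsV w = j}.ncard = B (clsV v) j)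
    (hWB : ∀ v j, {w | parW w = v ∧ w ≠ rootW ∧ clsW w = j}.ncard = B (clsW v) j)
    (v : V) (w : W) (hc : clsW w = clsV v) :
    ∃ e : ch rootV parV v ≃ ch rootW parW w, ∀ x, clsW (e x).1 = clsV x.1 := by
  haveI : Finite (ch rootV parV v) := hVfin v
  haveI : Finite (ch rootW parW w) := hWfin w
  have hfib : ∀ j : Fin n,
      Nonempty ({x : ch rootV parV v // clsV x.1 = j} ≃ {y : ch rootW parW w // clsW y.1 = j}) := by
    intro j
    rw [← Finite.card_eq]
    have h1 : Nat.card {x : ch rootV parV v // clsV x.1 = j} = B (clsV v) j := by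
      rw [← hVB v j, ← Nat.card_coe_set_eq]
      exact Nat.card_congr ⟨fun x => ⟨x.1.1, x.1.2.1, x.1.2.2, x.2⟩,
        fun y => ⟨⟨y.1, y.2.1, y.2.2.1⟩, y.2.2.2⟩, fun _ => rfl, fun _ => rfl⟩
    have h2 : Nat.card {y : ch rootW parW w // clsW y.1 = j} = B (clsV v) j := by
      rw [← hc, ← hWB w j, ← Nat.card_coe_set_eq]
      exact Nat.card_congr ⟨fun x => ⟨x.1.1, x.1.2.1, x.1.2.2, x.2⟩,
        fun y => ⟨⟨y.1, y.2.1, y.2.2.1⟩, y.2.2.2⟩, fun _ => rfl, fun _ => rfl⟩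
    rw [h1, h2]
  set e := fun j => Classical.choice (hfib j) with he
  refine ⟨(Equiv.sigmaFiberEquiv fun x : ch rootV parV v => clsV x.1).symm.trans
      ((Equiv.sigmaCongrRight e).trans
        (Equiv.sigmaFiberEquiv fun y : ch rootW parW w => clsW y.1)), fun x => ?_⟩
  exact (e (clsV x.1) ⟨x, rfl⟩).2

noncomputable def pick
    (rootV : V) (parV : V → V) (clsV : V → Fin n)
    (rootW : W) (parW : W → W) (clsW : W → Fin n)
    (B : Matrix (Fin n) (Fin n) ℕ)
    (hVfin : ∀ v, {w | parV w = v ∧ w ≠ rootV}.Finite)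
    (hWfin : ∀ v, {w | parW w = v ∧ w ≠ rootW}.Finite)
    (hVB : ∀ v j, {w | parV w = v ∧ w ≠ rootV ∧ clsV w = j}.ncard = B (clsV v) j)
    (hWB : ∀ v j, {w | parW w = v ∧ w ≠ rootW ∧ clsW w = j}.ncard = B (clsW v) j)
    (v : V) (w : W) (hc : clsW w = clsV v) :
    ch rootV parV v ≃ ch rootW parW w :=
  (childEquiv_exists rootV parV clsV rootW parW clsW B hVfin hWfin hVB hWB v w hc).choose

theorem pick_cls
    (rootV : V) (parV : V → V) (clsV : V → Fin n)
    (rootW : W) (parW : W → W) (clsW : W → Fin n)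
    (B : Matrix (Fin n) (Fin n) ℕ)
    (hVfin : ∀ v, {w | parV w = v ∧ w ≠ rootV}.Finite)
    (hWfin : ∀ v, {w | parW w = v ∧ w ≠ rootW}.Finite)
    (hVB : ∀ v j, {w | parV w = v ∧ w ≠ rootV ∧ clsV w = j}.ncard = B (clsV v) j)
    (hWB : ∀ v j, {w | parW w = v ∧ w ≠ rootW ∧ clsW w = j}.ncard = B (clsW v) j)
    (v : V) (w : W) (hc : clsW w = clsV v) (x : ch rootV parV v) :
    clsW ((pick rootV parV clsV rootW parW clsW B hVfin hWfin hVB hWB v w hc) x).1 = clsV x.1 :=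
  (childEquiv_exists rootV parV clsV rootW parW clsW B hVfin hWfin hVB hWB v w hc).choose_spec x

noncomputable def Fmap
    (rootV : V) (parV : V → V) (lvlV : V → ℕ) (clsV : V → Fin n)
    (rootW : W) (parW : W → W) (clsW : W → Fin n)
    (B : Matrix (Fin n) (Fin n) ℕ)
    (hVfin : ∀ v, {w | parV w = v ∧ w ≠ rootV}.Finite)
    (hWfin : ∀ v, {w | parW w = v ∧ w ≠ rootW}.Finite)
    (hVB : ∀ v j, {w | parV w = v ∧ w ≠ rootV ∧ clsV w = j}.ncard = B (clsV v) j)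
    (hWB : ∀ v j, {w | parW w = v ∧ w ≠ rootW ∧ clsW w = j}.ncard = B (clsW v) j)
    (hVlvl : ∀ v, v ≠ rootV → lvlV (parV v) + 1 = lvlV v) : V → W := fun v =>
  letI := Classical.propDecidable
  if h : v = rootV then rootW
  else
    have : lvlV (parV v) < lvlV v := hVlvl v h ▸ Nat.lt_succ_self _
    if hc : clsW (Fmap rootV parV lvlV clsV rootW parW clsW B hVfin hWfin hVB hWB hVlvl (parV v))
        = clsV (parV v) then
      (pick rootV parV clsV rootW parW clsW B hVfin hWfin hVB hWB (parV v) _ hc ⟨v, rfl, h⟩).1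
    else rootW
termination_by v => lvlV v

theorem Fmap_child
    (rootV : V) (parV : V → V) (lvlV : V → ℕ) (clsV : V → Fin n)
    (rootW : W) (parW : W → W) (lvlW : W → ℕ) (clsW : W → Fin n)
    (B : Matrix (Fin n) (Fin n) ℕ)
    (hV0 : lvlV rootV = 0) (hVroot : parV rootV = rootV)
    (hVlvl : ∀ v, v ≠ rootV → lvlV (parV v) + 1 = lvlV v)
    (hVuniq : ∀ v, lvlV v = 0 → v = rootV)
    (hW0 : lvlW rootW = 0) (hWroot : parW rootW = rootW)
    (hWlvl : ∀ w, w ≠ rootW → lvlW (parW w) + 1 = lvlW w)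
    (hWuniq : ∀ w, lvlW w = 0 → w = rootW)
    (hVrootcls : (clsV rootV : ℕ) = 0) (hWrootcls : (clsW rootW : ℕ) = 0)
    (hVfin : ∀ v, {w | parV w = v ∧ w ≠ rootV}.Finite)
    (hWfin : ∀ v, {w | parW w = v ∧ w ≠ rootW}.Finite)
    (hVB : ∀ v j, {w | parV w = v ∧ w ≠ rootV ∧ clsV w = j}.ncard = B (clsV v) j)
    (hWB : ∀ v j, {w | parW w = v ∧ w ≠ rootW ∧ clsW w = j}.ncard = B (clsW v) j)
    (p : V) (x : V) (hp : parV x = p) (hxr : x ≠ rootV)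
    (hc : clsW (Fmap rootV parV lvlV clsV rootW parW clsW B hVfin hWfin hVB hWB hVlvl p) = clsV p) :
    Fmap rootV parV lvlV clsV rootW parW clsW B hVfin hWfin hVB hWB hVlvl x = (pick rootV parV clsV rootW parW clsW B hVfin hWfin hVB hWB p (Fmap rootV parV lvlV clsV rootW parW clsW B hVfin hWfin hVB hWB hVlvl p) hc ⟨x, hp, hxr⟩).1 := by
  subst hp
  rw [Fmap]
  simp only []
  rw [dif_neg hxr, dif_pos hc]

theorem Fmap_root
    (rootV : V) (parV : V → V) (lvlV : V → ℕ) (clsV : V → Fin n)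
    (rootW : W) (parW : W → W) (lvlW : W → ℕ) (clsW : W → Fin n)
    (B : Matrix (Fin n) (Fin n) ℕ)
    (hV0 : lvlV rootV = 0) (hVroot : parV rootV = rootV)
    (hVlvl : ∀ v, v ≠ rootV → lvlV (parV v) + 1 = lvlV v)
    (hVuniq : ∀ v, lvlV v = 0 → v = rootV)
    (hW0 : lvlW rootW = 0) (hWroot : parW rootW = rootW)
    (hWlvl : ∀ w, w ≠ rootW → lvlW (parW w) + 1 = lvlW w)
    (hWuniq : ∀ w, lvlW w = 0 → w = rootW)
    (hVrootcls : (clsV rootV : ℕ) = 0) (hWrootcls : (clsW rootW : ℕ) = 0)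
    (hVfin : ∀ v, {w | parV w = v ∧ w ≠ rootV}.Finite)
    (hWfin : ∀ v, {w | parW w = v ∧ w ≠ rootW}.Finite)
    (hVB : ∀ v j, {w | parV w = v ∧ w ≠ rootV ∧ clsV w = j}.ncard = B (clsV v) j)
    (hWB : ∀ v j, {w | parW w = v ∧ w ≠ rootW ∧ clsW w = j}.ncard = B (clsW v) j)
    : Fmap rootV parV lvlV clsV rootW parW clsW B hVfin hWfin hVB hWB hVlvl rootV = rootW := by
  rw [Fmap]
  rw [dif_pos rfl]

theorem Fmap_spec
    (rootV : V) (parV : V → V) (lvlV : V → ℕ) (clsV : V → Fin n)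
    (rootW : W) (parW : W → W) (lvlW : W → ℕ) (clsW : W → Fin n)
    (B : Matrix (Fin n) (Fin n) ℕ)
    (hV0 : lvlV rootV = 0) (hVroot : parV rootV = rootV)
    (hVlvl : ∀ v, v ≠ rootV → lvlV (parV v) + 1 = lvlV v)
    (hVuniq : ∀ v, lvlV v = 0 → v = rootV)
    (hW0 : lvlW rootW = 0) (hWroot : parW rootW = rootW)
    (hWlvl : ∀ w, w ≠ rootW → lvlW (parW w) + 1 = lvlW w)
    (hWuniq : ∀ w, lvlW w = 0 → w = rootW)
    (hVrootcls : (clsV rootV : ℕ) = 0) (hWrootcls : (clsW rootW : ℕ) = 0)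
    (hVfin : ∀ v, {w | parV w = v ∧ w ≠ rootV}.Finite)
    (hWfin : ∀ v, {w | parW w = v ∧ w ≠ rootW}.Finite)
    (hVB : ∀ v j, {w | parV w = v ∧ w ≠ rootV ∧ clsV w = j}.ncard = B (clsV v) j)
    (hWB : ∀ v j, {w | parW w = v ∧ w ≠ rootW ∧ clsW w = j}.ncard = B (clsW v) j)
    : ∀ v, clsW (Fmap rootV parV lvlV clsV rootW parW clsW B hVfin hWfin hVB hWB hVlvl v) = clsV v ∧ lvlW (Fmap rootV parV lvlV clsV rootW parW clsW B hVfin hWfin hVB hWB hVlvl v) = lvlV v ∧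
      (v ≠ rootV → parW (Fmap rootV parV lvlV clsV rootW parW clsW B hVfin hWfin hVB hWB hVlvl v) = Fmap rootV parV lvlV clsV rootW parW clsW B hVfin hWfin hVB hWB hVlvl (parV v) ∧ Fmap rootV parV lvlV clsV rootW parW clsW B hVfin hWfin hVB hWB hVlvl v ≠ rootW) := by
  have key : ∀ k v, lvlV v = k → clsW (Fmap rootV parV lvlV clsV rootW parW clsW B hVfin hWfin hVB hWB hVlvl v) = clsV v ∧ lvlW (Fmap rootV parV lvlV clsV rootW parW clsW B hVfin hWfin hVB hWB hVlvl v) = lvlV v ∧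
      (v ≠ rootV → parW (Fmap rootV parV lvlV clsV rootW parW clsW B hVfin hWfin hVB hWB hVlvl v) = Fmap rootV parV lvlV clsV rootW parW clsW B hVfin hWfin hVB hWB hVlvl (parV v) ∧ Fmap rootV parV lvlV clsV rootW parW clsW B hVfin hWfin hVB hWB hVlvl v ≠ rootW) := by
    intro k
    induction k using Nat.strong_induction_on with
    | _ k IH =>
      intro v hk
      by_cases h : v = rootV
      · rw [h]
        rw [Fmap_root rootV parV lvlV clsV rootW parW lvlW clsW B hV0 hVroot hVlvl hVuniq hW0 hWroot hWlvl hWuniq hVrootcls hWrootcls hVfin hWfin hVB hWB]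
        exact ⟨Fin.ext (by rw [hWrootcls, hVrootcls]), by rw [hW0, hV0],
          fun hh => absurd rfl hh⟩
      · have hlt : lvlV (parV v) < k := hk ▸ (hVlvl v h ▸ Nat.lt_succ_self _)
        obtain ⟨hcp, hlp, -⟩ := IH _ hlt (parV v) rfl
        have hx := Fmap_child rootV parV lvlV clsV rootW parW lvlW clsW B hV0 hVroot hVlvl hVuniq hW0 hWroot hWlvl hWuniq hVrootcls hWrootcls hVfin hWfin hVB hWB (parV v) v rfl h hcp
        obtain ⟨hpar, hroot⟩ :=
          (pick rootV parV clsV rootW parW clsW B hVfin hWfin hVB hWB (parV v) (Fmap rootV parV lvlV clsV rootW parW clsW B hVfin hWfin hVB hWB hVlvl (parV v)) hcp ⟨v, rfl, h⟩).2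
        refine ⟨?_, ?_, fun _ => ⟨?_, ?_⟩⟩
        · rw [hx]; exact pick_cls rootV parV clsV rootW parW clsW B hVfin hWfin hVB hWB (parV v) (Fmap rootV parV lvlV clsV rootW parW clsW B hVfin hWfin hVB hWB hVlvl (parV v)) hcp ⟨v, rfl, h⟩
        · rw [hx]
          have h2 := hWlvl _ hroot
          rw [hpar, hlp] at h2
          rw [← hVlvl v h, ← h2]
        · rw [hx, hpar]
        · rw [hx]; exact hroot
  exact fun v => key _ v rfl

theorem Fmap_inj
    (rootV : V) (parV : V → V) (lvlV : V → ℕ) (clsV : V → Fin n)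
    (rootW : W) (parW : W → W) (lvlW : W → ℕ) (clsW : W → Fin n)
    (B : Matrix (Fin n) (Fin n) ℕ)
    (hV0 : lvlV rootV = 0) (hVroot : parV rootV = rootV)
    (hVlvl : ∀ v, v ≠ rootV → lvlV (parV v) + 1 = lvlV v)
    (hVuniq : ∀ v, lvlV v = 0 → v = rootV)
    (hW0 : lvlW rootW = 0) (hWroot : parW rootW = rootW)
    (hWlvl : ∀ w, w ≠ rootW → lvlW (parW w) + 1 = lvlW w)
    (hWuniq : ∀ w, lvlW w = 0 → w = rootW)
    (hVrootcls : (clsV rootV : ℕ) = 0) (hWrootcls : (clsW rootW : ℕ) = 0)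
    (hVfin : ∀ v, {w | parV w = v ∧ w ≠ rootV}.Finite)
    (hWfin : ∀ v, {w | parW w = v ∧ w ≠ rootW}.Finite)
    (hVB : ∀ v j, {w | parV w = v ∧ w ≠ rootV ∧ clsV w = j}.ncard = B (clsV v) j)
    (hWB : ∀ v j, {w | parW w = v ∧ w ≠ rootW ∧ clsW w = j}.ncard = B (clsW v) j)
    : Function.Injective (Fmap rootV parV lvlV clsV rootW parW clsW B hVfin hWfin hVB hWB hVlvl) := by
  have key : ∀ k v v', lvlV v = k → Fmap rootV parV lvlV clsV rootW parW clsW B hVfin hWfin hVB hWB hVlvl v = Fmap rootV parV lvlV clsV rootW parW clsW B hVfin hWfin hVB hWB hVlvl v' → v = v' := by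
    intro k
    induction k using Nat.strong_induction_on with
    | _ k IH =>
      intro v v' hk he
      have hlv : lvlV v = lvlV v' := by
        rw [← (Fmap_spec rootV parV lvlV clsV rootW parW lvlW clsW B hV0 hVroot hVlvl hVuniq hW0 hWroot hWlvl hWuniq hVrootcls hWrootcls hVfin hWfin hVB hWB v).2.1, ← (Fmap_spec rootV parV lvlV clsV rootW parW lvlW clsW B hV0 hVroot hVlvl hVuniq hW0 hWroot hWlvl hWuniq hVrootcls hWrootcls hVfin hWfin hVB hWB v').2.1, he]
      by_cases h : v = rootV
      · rw [h]
        exact (hVuniq v' (by rw [← hlv, h, hV0])).symm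
      · have h' : v' ≠ rootV := by
          intro hh; subst hh; exact h (hVuniq v (by rw [hlv, hV0]))
        have hpe : Fmap rootV parV lvlV clsV rootW parW clsW B hVfin hWfin hVB hWB hVlvl (parV v) = Fmap rootV parV lvlV clsV rootW parW clsW B hVfin hWfin hVB hWB hVlvl (parV v') := by
          rw [← ((Fmap_spec rootV parV lvlV clsV rootW parW lvlW clsW B hV0 hVroot hVlvl hVuniq hW0 hWroot hWlvl hWuniq hVrootcls hWrootcls hVfin hWfin hVB hWB v).2.2 h).1, ← ((Fmap_spec rootV parV lvlV clsV rootW parW lvlW clsW B hV0 hVroot hVlvl hVuniq hW0 hWroot hWlvl hWuniq hVrootcls hWrootcls hVfin hWfin hVB hWB v').2.2 h').1, he]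
        have hlt : lvlV (parV v) < k := hk ▸ (hVlvl v h ▸ Nat.lt_succ_self _)
        have hpp : parV v = parV v' := IH _ hlt _ _ rfl hpe
        have hcp : clsW (Fmap rootV parV lvlV clsV rootW parW clsW B hVfin hWfin hVB hWB hVlvl (parV v)) = clsV (parV v) := (Fmap_spec rootV parV lvlV clsV rootW parW lvlW clsW B hV0 hVroot hVlvl hVuniq hW0 hWroot hWlvl hWuniq hVrootcls hWrootcls hVfin hWfin hVB hWB (parV v)).1
        rw [Fmap_child rootV parV lvlV clsV rootW parW lvlW clsW B hV0 hVroot hVlvl hVuniq hW0 hWroot hWlvl hWuniq hVrootcls hWrootcls hVfin hWfin hVB hWB (parV v) v rfl h hcp,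
          Fmap_child rootV parV lvlV clsV rootW parW lvlW clsW B hV0 hVroot hVlvl hVuniq hW0 hWroot hWlvl hWuniq hVrootcls hWrootcls hVfin hWfin hVB hWB (parV v) v' hpp.symm h' hcp] at he
        have := (pick rootV parV clsV rootW parW clsW B hVfin hWfin hVB hWB (parV v) (Fmap rootV parV lvlV clsV rootW parW clsW B hVfin hWfin hVB hWB hVlvl (parV v)) hcp).injective (Subtype.ext he)
        exact congrArg Subtype.val this
  exact fun v v' => key _ v v' rfl

theorem Fmap_surj
    (rootV : V) (parV : V → V) (lvlV : V → ℕ) (clsV : V → Fin n)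
    (rootW : W) (parW : W → W) (lvlW : W → ℕ) (clsW : W → Fin n)
    (B : Matrix (Fin n) (Fin n) ℕ)
    (hV0 : lvlV rootV = 0) (hVroot : parV rootV = rootV)
    (hVlvl : ∀ v, v ≠ rootV → lvlV (parV v) + 1 = lvlV v)
    (hVuniq : ∀ v, lvlV v = 0 → v = rootV)
    (hW0 : lvlW rootW = 0) (hWroot : parW rootW = rootW)
    (hWlvl : ∀ w, w ≠ rootW → lvlW (parW w) + 1 = lvlW w)
    (hWuniq : ∀ w, lvlW w = 0 → w = rootW)
    (hVrootcls : (clsV rootV : ℕ) = 0) (hWrootcls : (clsW rootW : ℕ) = 0)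
    (hVfin : ∀ v, {w | parV w = v ∧ w ≠ rootV}.Finite)
    (hWfin : ∀ v, {w | parW w = v ∧ w ≠ rootW}.Finite)
    (hVB : ∀ v j, {w | parV w = v ∧ w ≠ rootV ∧ clsV w = j}.ncard = B (clsV v) j)
    (hWB : ∀ v j, {w | parW w = v ∧ w ≠ rootW ∧ clsW w = j}.ncard = B (clsW v) j)
    : Function.Surjective (Fmap rootV parV lvlV clsV rootW parW clsW B hVfin hWfin hVB hWB hVlvl) := by
  have key : ∀ k w, lvlW w = k → ∃ v, Fmap rootV parV lvlV clsV rootW parW clsW B hVfin hWfin hVB hWB hVlvl v = w := by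
    intro k
    induction k using Nat.strong_induction_on with
    | _ k IH =>
      intro w hk
      by_cases h : w = rootW
      · exact ⟨rootV, by rw [Fmap_root rootV parV lvlV clsV rootW parW lvlW clsW B hV0 hVroot hVlvl hVuniq hW0 hWroot hWlvl hWuniq hVrootcls hWrootcls hVfin hWfin hVB hWB, h]⟩
      · have hlt : lvlW (parW w) < k := hk ▸ (hWlvl w h ▸ Nat.lt_succ_self _)
        obtain ⟨v', hv'⟩ := IH _ hlt (parW w) rfl
        have hcp : clsW (Fmap rootV parV lvlV clsV rootW parW clsW B hVfin hWfin hVB hWB hVlvl v') = clsV v' := (Fmap_spec rootV parV lvlV clsV rootW parW lvlW clsW B hV0 hVroot hVlvl hVuniq hW0 hWroot hWlvl hWuniq hVrootcls hWrootcls hVfin hWfin hVB hWB v').1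
        have hwmem : w ∈ ch rootW parW (Fmap rootV parV lvlV clsV rootW parW clsW B hVfin hWfin hVB hWB hVlvl v') := ⟨by rw [hv'], h⟩
        set e := pick rootV parV clsV rootW parW clsW B hVfin hWfin hVB hWB v' (Fmap rootV parV lvlV clsV rootW parW clsW B hVfin hWfin hVB hWB hVlvl v') hcp with hedef
        set y := e.symm ⟨w, hwmem⟩ with hy
        refine ⟨y.1, ?_⟩
        rw [Fmap_child rootV parV lvlV clsV rootW parW lvlW clsW B hV0 hVroot hVlvl hVuniq hW0 hWroot hWlvl hWuniq hVrootcls hWrootcls hVfin hWfin hVB hWB v' y.1 y.2.1 y.2.2 hcp]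
        show (e (e.symm ⟨w, hwmem⟩)).1 = w
        rw [Equiv.apply_symm_apply]
  exact fun w => key _ w rfl

end SimpleTreeIso



/-- Two rooted simple trees (encoded by root, parent map and level function) with vertex
classes `Fin n` (roots in class `0`, i.e. class 1) and the same incidence matrix `B`
(`B i j` = number of children in class `j` of any vertex in class `i`) are graph
isomorphic; moreover the isomorphism maps each level onto the corresponding level and
preserves vertex classes and the parent relation. -/
theorem simple_trees_with_same_incidence_isomorphic {V W : Type*} {n : ℕ}
    (rootV : V) (parV : V → V) (lvlV : V → ℕ) (clsV : V → Fin n)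
    (rootW : W) (parW : W → W) (lvlW : W → ℕ) (clsW : W → Fin n)
    (B : Matrix (Fin n) (Fin n) ℕ)
    -- tree structure on V
    (hV0 : lvlV rootV = 0) (hVroot : parV rootV = rootV)
    (hVlvl : ∀ v, v ≠ rootV → lvlV (parV v) + 1 = lvlV v)
    (hVuniq : ∀ v, lvlV v = 0 → v = rootV)
    -- tree structure on W
    (hW0 : lvlW rootW = 0) (hWroot : parW rootW = rootW)
    (hWlvl : ∀ w, w ≠ rootW → lvlW (parW w) + 1 = lvlW w)
    (hWuniq : ∀ w, lvlW w = 0 → w = rootW)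
    -- roots lie in class 1 (index 0)
    (hVrootcls : (clsV rootV : ℕ) = 0) (hWrootcls : (clsW rootW : ℕ) = 0)
    -- finite child sets
    (hVfin : ∀ v, {w | parV w = v ∧ w ≠ rootV}.Finite)
    (hWfin : ∀ v, {w | parW w = v ∧ w ≠ rootW}.Finite)
    -- common incidence matrix: class counts of children
    (hVB : ∀ v j, {w | parV w = v ∧ w ≠ rootV ∧ clsV w = j}.ncard = B (clsV v) j)
    (hWB : ∀ v j, {w | parW w = v ∧ w ≠ rootW ∧ clsW w = j}.ncard = B (clsW v) j) :
    ∃ σ : V ≃ W, σ rootV = rootW ∧ (∀ v, lvlW (σ v) = lvlV v) ∧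
      (∀ v, clsW (σ v) = clsV v) ∧ ∀ v, σ (parV v) = parW (σ v) := by
  classical
  refine ⟨Equiv.ofBijective (SimpleTreeIso.Fmap rootV parV lvlV clsV rootW parW clsW B hVfin hWfin hVB hWB hVlvl)
      ⟨SimpleTreeIso.Fmap_inj rootV parV lvlV clsV rootW parW lvlW clsW B hV0 hVroot hVlvl hVuniq hW0 hWroot hWlvl hWuniq hVrootcls hWrootcls hVfin hWfin hVB hWB, SimpleTreeIso.Fmap_surj rootV parV lvlV clsV rootW parW lvlW clsW B hV0 hVroot hVlvl hVuniq hW0 hWroot hWlvl hWuniq hVrootcls hWrootcls hVfin hWfin hVB hWB⟩, ?_, ?_, ?_, ?_⟩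
  · exact SimpleTreeIso.Fmap_root rootV parV lvlV clsV rootW parW lvlW clsW B hV0 hVroot hVlvl hVuniq hW0 hWroot hWlvl hWuniq hVrootcls hWrootcls hVfin hWfin hVB hWB
  · exact fun v => (SimpleTreeIso.Fmap_spec rootV parV lvlV clsV rootW parW lvlW clsW B hV0 hVroot hVlvl hVuniq hW0 hWroot hWlvl hWuniq hVrootcls hWrootcls hVfin hWfin hVB hWB v).2.1
  · exact fun v => (SimpleTreeIso.Fmap_spec rootV parV lvlV clsV rootW parW lvlW clsW B hV0 hVroot hVlvl hVuniq hW0 hWroot hWlvl hWuniq hVrootcls hWrootcls hVfin hWfin hVB hWB v).1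
  · intro v
    show SimpleTreeIso.Fmap rootV parV lvlV clsV rootW parW clsW B hVfin hWfin hVB hWB hVlvl (parV v)
      = parW (SimpleTreeIso.Fmap rootV parV lvlV clsV rootW parW clsW B hVfin hWfin hVB hWB hVlvl v)
    by_cases h : v = rootV
    · rw [h, hVroot, SimpleTreeIso.Fmap_root rootV parV lvlV clsV rootW parW lvlW clsW B hV0 hVroot hVlvl hVuniq hW0 hWroot hWlvl hWuniq hVrootcls hWrootcls hVfin hWfin hVB hWB, hWroot]
    · exact ((SimpleTreeIso.Fmap_spec rootV parV lvlV clsV rootW parW lvlW clsW B hV0 hVroot hVlvl hVuniq hW0 hWroot hWlvl hWuniq hVrootcls hWrootcls hVfin hWfin hVB hWB v).2.2 h).1.symm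
end
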